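/- For every m ∈ ℕ, the character χ_m is a positive-definite function on G = SU(2): for every n ∈ ℕ, every family U : Fin n → G and every family z : Fin n → ℂ, the sum ∑_{i,k} z_i · conj(z_k) · χ_m((U_k)⁻¹ · U_i) is a nonnegative real number (its imaginary part vanishes and its real part is ≥ 0). -/

import Mathlib

open MeasureTheory Filter

noncomputable section

/-- `G = SU(2)`, realized as `Matrix.specialUnitaryGroup (Fin 2) ℂ`. -/
abbrev SU2 := Matrix.specialUnitaryGroup (Fin 2) ℂ

/-- The group structure on `SU(2)`: the inverse is the conjugate transpose. -/
instance : Group SU2 :=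
  { (inferInstance : Monoid SU2) with
    inv := fun U => ⟨star (U : Matrix (Fin 2) (Fin 2) ℂ), by
      obtain ⟨h1, h2⟩ := Submonoid.mem_inf.mp U.2
      refine Submonoid.mem_inf.mpr ⟨Unitary.star_mem h1, ?_⟩
      have hdet : (U : Matrix (Fin 2) (Fin 2) ℂ).det = 1 := h2
      simp [MonoidHom.mem_mker, Matrix.star_eq_conjTranspose, Matrix.det_conjTranspose, hdet]⟩
    inv_mul_cancel := fun U => Subtype.ext ((Unitary.mem_iff.mp (Submonoid.mem_inf.mp U.2).1).1) }

instance : MeasurableSpace SU2 := borel SU2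
instance : BorelSpace SU2 := ⟨rfl⟩

/-- The irreducible character `χ_m` of the spin-`m/2` representation of `SU(2)`:
`χ_m(U) = S_m((tr U).re / 2)` where `S_m` is the degree-`m` Chebyshev polynomial of the
second kind. -/
def chi (m : ℕ) (U : SU2) : ℝ :=
  (Polynomial.Chebyshev.U ℝ (m : ℤ)).eval (((U : Matrix (Fin 2) (Fin 2) ℂ).trace).re / 2)

namespace SU2Work
open Matrix Finset

variable (m : ℕ)

/-- m-fold Kronecker power of a 2×2 complex matrix. -/
def P (A : Matrix (Fin 2) (Fin 2) ℂ) : Matrix (Fin m → Fin 2) (Fin m → Fin 2) ℂ :=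
  Matrix.of fun f g => ∏ i, A (f i) (g i)

lemma P_apply (A : Matrix (Fin 2) (Fin 2) ℂ) (f g : Fin m → Fin 2) :
    P m A f g = ∏ i, A (f i) (g i) := rfl

lemma P_mul (A B : Matrix (Fin 2) (Fin 2) ℂ) : P m (A * B) = P m A * P m B := by
  ext f h
  simp only [P_apply, Matrix.mul_apply]
  rw [Fintype.prod_sum]
  exact Finset.sum_congr rfl fun g _ => Finset.prod_mul_distrib

lemma P_one : P m 1 = 1 := by
  ext f g
  simp only [P_apply]
  by_cases h : f = g
  · subst h; simp [Matrix.one_apply]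
  · obtain ⟨i, hi⟩ := Function.ne_iff.mp h
    rw [Matrix.one_apply, if_neg h]
    exact Finset.prod_eq_zero (Finset.mem_univ i) (by simp [Matrix.one_apply, hi])

lemma P_star (A : Matrix (Fin 2) (Fin 2) ℂ) : P m (star A) = star (P m A) := by
  ext f g
  simp only [P_apply, Matrix.star_apply, Matrix.conjTranspose_apply]
  exact (star_prod _ _).symm

/-- permutation matrix acting on tensor factors -/
def T (σ : Equiv.Perm (Fin m)) : Matrix (Fin m → Fin 2) (Fin m → Fin 2) ℂ :=
  Matrix.of fun f g => if g = f ∘ σ then 1 else 0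

lemma T_mul_P (σ : Equiv.Perm (Fin m)) (A : Matrix (Fin 2) (Fin 2) ℂ) :
    T m σ * P m A = P m A * T m σ := by
  ext f h
  simp only [Matrix.mul_apply, T, Matrix.of_apply, P_apply, ite_mul, one_mul, zero_mul,
    mul_ite, mul_one, mul_zero]
  have key : ∀ g : Fin m → Fin 2, (h = g ∘ ⇑σ) = (g = h ∘ ⇑σ⁻¹) := by
    intro g; apply propext; constructor
    · rintro rfl; funext i; simp
    · rintro rfl; funext i; simp
  simp_rw [key]
  rw [Finset.sum_ite_eq' Finset.univ (f ∘ ⇑σ), Finset.sum_ite_eq' Finset.univ (h ∘ ⇑σ⁻¹)]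
  simp only [Finset.mem_univ, if_true]
  exact Fintype.prod_equiv σ _ _ (fun i => by simp)

lemma T_mul_T (σ τ : Equiv.Perm (Fin m)) : T m σ * T m τ = T m (σ * τ) := by
  ext f h
  simp only [Matrix.mul_apply, T, Matrix.of_apply, ite_mul, one_mul, zero_mul]
  rw [Finset.sum_ite_eq' Finset.univ (f ∘ ⇑σ)]
  simp only [Finset.mem_univ, if_true]
  congr 1

lemma T_star (σ : Equiv.Perm (Fin m)) : star (T m σ) = T m σ⁻¹ := by
  ext f g
  simp only [Matrix.star_apply, Matrix.conjTranspose_apply, T, Matrix.of_apply]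
  have key : (f = g ∘ ⇑σ) ↔ (g = f ∘ ⇑σ⁻¹) := by
    constructor
    · rintro rfl; funext i; simp
    · rintro rfl; funext i; simp
  by_cases h : f = g ∘ ⇑σ
  · rw [if_pos h, if_pos (key.mp h), star_one]
  · rw [if_neg h, if_neg (fun hh => h (key.mpr hh)), star_zero]

/-- the symmetrizer -/
def Pim : Matrix (Fin m → Fin 2) (Fin m → Fin 2) ℂ :=
  ((m.factorial : ℂ))⁻¹ • ∑ σ : Equiv.Perm (Fin m), T m σ

lemma Pi_mul_P (A : Matrix (Fin 2) (Fin 2) ℂ) : Pim m * P m A = P m A * Pim m := by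
  simp only [Pim, Matrix.smul_mul, Matrix.mul_smul, Finset.sum_mul, Finset.mul_sum]
  congr 1
  exact Finset.sum_congr rfl fun σ _ => T_mul_P m σ A

lemma Pi_star : star (Pim m) = Pim m := by
  unfold Pim
  rw [star_smul, star_sum]
  simp only [T_star]
  rw [show ∑ x : Equiv.Perm (Fin m), T m x⁻¹ = ∑ x : Equiv.Perm (Fin m), T m x from
    Fintype.sum_equiv (Equiv.inv (Equiv.Perm (Fin m))) _ _ (fun x => rfl)]
  congr 1
  simp

lemma Pi_idem : Pim m * Pim m = Pim m := by
  unfold Pim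
  simp only [Matrix.smul_mul, Matrix.mul_smul, Finset.sum_mul, Finset.mul_sum, T_mul_T,
    smul_smul]
  have h1 : ∀ σ : Equiv.Perm (Fin m), ∑ τ : Equiv.Perm (Fin m), T m (τ * σ)
      = ∑ τ : Equiv.Perm (Fin m), T m τ := fun σ =>
    Equiv.sum_comp (Equiv.mulRight σ) (T m)
  simp_rw [h1]
  rw [Finset.sum_const, Finset.card_univ, Fintype.card_perm, Fintype.card_fin]
  rw [← Nat.cast_smul_eq_nsmul ℂ, smul_smul, smul_smul]
  congr 1
  have h : ((m.factorial : ℂ)) ≠ 0 := Nat.cast_ne_zero.mpr (Nat.factorial_ne_zero m)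
  field_simp

/-- number of `i` with `f i = 0` -/
def kof (f : Fin m → Fin 2) : ℕ := #(Finset.univ.filter fun i => f i = 0)

lemma kof_le (f : Fin m → Fin 2) : kof m f ≤ m := by
  classical
  calc kof m f ≤ #(Finset.univ : Finset (Fin m)) := Finset.card_filter_le _ _
  _ = m := by simp

/-- the stabilizer of `f` in the permutation group -/
def stabEquiv (f : Fin m → Fin 2) :
    {σ : Equiv.Perm (Fin m) // ∀ i, f (σ i) = f i} ≃
      Equiv.Perm {i // f i = 0} × Equiv.Perm {i // ¬ f i = 0} where
  toFun σ := ⟨σ.1.subtypePerm (fun i => by rw [σ.2 i]),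
              σ.1.subtypePerm (fun i => by rw [σ.2 i])⟩
  invFun p := ⟨Equiv.Perm.subtypeCongr p.1 p.2, fun i => by
    by_cases h : f i = 0
    · rw [Equiv.Perm.subtypeCongr.left_apply p.1 p.2 h]
      rw [(p.1 ⟨i, h⟩).2, h]
    · rw [Equiv.Perm.subtypeCongr.right_apply p.1 p.2 h]
      have h2 := (p.2 ⟨i, h⟩).2
      have hfin : ∀ x : Fin 2, ¬ x = 0 → x = 1 := by decide
      rw [hfin _ h2, hfin _ h]⟩
  left_inv := by
    intro σ
    apply Subtype.ext
    apply Equiv.ext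
    intro i
    dsimp only
    rw [Equiv.Perm.subtypeCongr.apply]
    by_cases h : f i = 0
    · rw [dif_pos h]; rfl
    · rw [dif_neg h]; rfl
  right_inv := by
    intro p
    ext x
    · dsimp only
      simp [Equiv.Perm.subtypePerm_apply, Equiv.Perm.subtypeCongr.left_apply _ _ x.2]
    · dsimp only
      simp [Equiv.Perm.subtypePerm_apply, Equiv.Perm.subtypeCongr.right_apply _ _ x.2]

lemma stab_card (f : Fin m → Fin 2) :
    #(Finset.univ.filter fun σ : Equiv.Perm (Fin m) => ∀ i, f (σ i) = f i)
      = (kof m f).factorial * (m - kof m f).factorial := by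
  classical
  rw [← Fintype.card_subtype]
  rw [Fintype.card_congr (stabEquiv m f)]
  rw [Fintype.card_prod, Fintype.card_perm, Fintype.card_perm]
  congr 2
  · rw [Fintype.card_subtype]; rfl
  · rw [Fintype.card_subtype_compl, Fintype.card_fin, Fintype.card_subtype]; rfl

/-- functions with `k` zeros correspond to `k`-element subsets -/
def fiberEquiv (k : ℕ) :
    {f : Fin m → Fin 2 // kof m f = k} ≃ {s : Finset (Fin m) // #s = k} where
  toFun f := ⟨Finset.univ.filter fun i => f.1 i = 0, f.2⟩
  invFun s := ⟨fun i => if i ∈ s.1 then 0 else 1, by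
    have : (Finset.univ.filter fun i => (if i ∈ s.1 then (0 : Fin 2) else 1) = 0) = s.1 := by
      ext i
      simp only [Finset.mem_filter, Finset.mem_univ, true_and]
      by_cases h : i ∈ s.1 <;> simp [h]
    rw [kof, this, s.2]⟩
  left_inv := by
    intro f
    apply Subtype.ext
    funext i
    by_cases h : f.1 i = 0
    · simp [h]
    · have hfin : ∀ x : Fin 2, ¬ x = 0 → x = 1 := by decide
      simp [h, hfin _ h]
  right_inv := by
    intro s
    apply Subtype.ext
    ext i
    simp only [Finset.mem_filter, Finset.mem_univ, true_and]
    by_cases h : i ∈ s.1 <;> simp [h]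

lemma fiber_card (k : ℕ) :
    #(Finset.univ.filter fun f : Fin m → Fin 2 => kof m f = k) = m.choose k := by
  classical
  rw [← Fintype.card_subtype, Fintype.card_congr (fiberEquiv m k), Fintype.card_finset_len,
    Fintype.card_fin]

lemma prod_diag (d : Fin 2 → ℂ) (f : Fin m → Fin 2) :
    ∏ i, d (f i) = d 0 ^ (kof m f) * d 1 ^ (m - kof m f) := by
  classical
  rw [← Finset.prod_filter_mul_prod_filter_not Finset.univ (fun i => f i = 0)]
  congr 1
  · rw [Finset.prod_congr rfl (fun i hi => by rw [(Finset.mem_filter.mp hi).2]),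
      Finset.prod_const]
    rfl
  · have hfin : ∀ x : Fin 2, ¬ x = 0 → x = 1 := by decide
    rw [Finset.prod_congr rfl (fun i hi => by rw [hfin _ (Finset.mem_filter.mp hi).2]),
      Finset.prod_const]
    congr 1
    have h2 := Finset.card_filter_add_card_filter_not
      (s := Finset.univ) (p := fun i : Fin m => f i = 0)
    have h3 : #(Finset.univ : Finset (Fin m)) = m := by simp
    have h4 : kof m f = #(Finset.univ.filter fun i => f i = 0) := rfl
    omega

lemma trace_T_P_diag (σ : Equiv.Perm (Fin m)) (d : Fin 2 → ℂ) :
    Matrix.trace (T m σ * P m (Matrix.diagonal d)) =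
      ∑ f : Fin m → Fin 2, if (∀ i, f (σ i) = f i) then ∏ i, d (f i) else 0 := by
  classical
  rw [Matrix.trace]
  refine Finset.sum_congr rfl fun f _ => ?_
  rw [Matrix.diag_apply, Matrix.mul_apply]
  simp only [T, Matrix.of_apply, ite_mul, one_mul, zero_mul]
  rw [Finset.sum_ite_eq' Finset.univ (f ∘ ⇑σ)]
  simp only [Finset.mem_univ, if_true]
  rw [P_apply]
  by_cases h : ∀ i, f (σ i) = f i
  · rw [if_pos h]
    refine Finset.prod_congr rfl fun i _ => ?_
    rw [Function.comp_apply, Matrix.diagonal_apply, if_pos (h i), h i]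
  · rw [if_neg h]
    push_neg at h
    obtain ⟨i, hi⟩ := h
    exact Finset.prod_eq_zero (Finset.mem_univ i)
      (by simp [Matrix.diagonal_apply, hi])

lemma trace_Pi_P_diag (d : Fin 2 → ℂ) :
    Matrix.trace (Pim m * P m (Matrix.diagonal d)) =
      ∑ k ∈ Finset.range (m+1), d 0 ^ k * d 1 ^ (m - k) := by
  classical
  unfold Pim
  rw [Matrix.smul_mul, Matrix.trace_smul, Finset.sum_mul, Matrix.trace_sum]
  simp_rw [trace_T_P_diag]
  rw [Finset.sum_comm]
  have h1 : ∀ f : Fin m → Fin 2, (∑ σ : Equiv.Perm (Fin m),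
      if (∀ i, f (σ i) = f i) then ∏ i, d (f i) else 0)
      = (((kof m f).factorial * (m - kof m f).factorial : ℕ) : ℂ)
          * (d 0 ^ (kof m f) * d 1 ^ (m - kof m f)) := by
    intro f
    rw [Finset.sum_ite, Finset.sum_const, Finset.sum_const_zero, add_zero, stab_card,
      nsmul_eq_mul, prod_diag]
  simp_rw [h1]
  rw [← Finset.sum_fiberwise_of_maps_to (g := kof m) (t := Finset.range (m+1))
    (fun f _ => Finset.mem_range.mpr (Nat.lt_succ_of_le (kof_le m f)))]
  have h2 : ∀ k ∈ Finset.range (m+1),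
      (∑ f ∈ Finset.univ.filter (fun f : Fin m → Fin 2 => kof m f = k),
        ((((kof m f).factorial * (m - kof m f).factorial : ℕ) : ℂ)
          * (d 0 ^ (kof m f) * d 1 ^ (m - kof m f))))
      = (m.factorial : ℂ) * (d 0 ^ k * d 1 ^ (m - k)) := by
    intro k hk
    have hkm : k ≤ m := Nat.lt_succ_iff.mp (Finset.mem_range.mp hk)
    rw [Finset.sum_congr rfl (fun f hf => by rw [(Finset.mem_filter.mp hf).2])]
    rw [Finset.sum_const, fiber_card, nsmul_eq_mul, ← mul_assoc]
    congr 1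
    rw [← Nat.cast_mul]
    rw [show m.choose k * (k.factorial * (m - k).factorial)
        = m.choose k * k.factorial * (m - k).factorial by ring]
    rw [Nat.choose_mul_factorial_mul_factorial hkm]
  rw [Finset.sum_congr rfl h2, smul_eq_mul, Finset.mul_sum]
  refine Finset.sum_congr rfl fun k _ => ?_
  rw [← mul_assoc]
  have h : ((m.factorial : ℂ)) ≠ 0 := Nat.cast_ne_zero.mpr (Nat.factorial_ne_zero m)
  rw [inv_mul_cancel₀ h, one_mul]

lemma geom_succ (lam mu : ℂ) (M : ℕ) :
    ∑ k ∈ Finset.range (M+2), lam ^ k * mu ^ (M+1-k)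
      = mu ^ (M+1) + lam * ∑ k ∈ Finset.range (M+1), lam ^ k * mu ^ (M-k) := by
  rw [Finset.sum_range_succ' (fun k => lam ^ k * mu ^ (M+1-k))]
  have e : ∀ k ∈ Finset.range (M+1),
      lam ^ (k+1) * mu ^ (M+1-(k+1)) = lam * (lam ^ k * mu ^ (M-k)) := by
    intro k hk
    have h4 : M + 1 - (k+1) = M - k := by omega
    rw [h4]; ring
  rw [Finset.sum_congr rfl e, ← Finset.mul_sum]
  simp [add_comm]

lemma geom_cheb (lam mu : ℂ) (h : lam * mu = 1) (M : ℕ) :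
    ∑ k ∈ Finset.range (M+1), lam ^ k * mu ^ (M-k)
      = (Polynomial.Chebyshev.U ℂ (M : ℤ)).eval ((lam + mu)/2) := by
  induction M using Nat.twoStepInduction with
  | zero =>
    simp [Polynomial.Chebyshev.U_zero]
  | one =>
    rw [show ((1:ℕ):ℤ) = 1 by norm_num, Polynomial.Chebyshev.U_one]
    simp [Finset.sum_range_succ]
    ring
  | more M ih2 ih1 =>
    have hcast : ((M + 2 : ℕ) : ℤ) = (M : ℤ) + 2 := by push_cast; ring
    rw [hcast, Polynomial.Chebyshev.U_add_two]
    simp only [Polynomial.eval_sub, Polynomial.eval_mul, Polynomial.eval_ofNat,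
      Polynomial.eval_X]
    have e1 : ((M + 1 : ℕ) : ℤ) = (M : ℤ) + 1 := by push_cast; ring
    rw [← e1, ← ih1, ← ih2]
    have r1 := geom_succ lam mu M
    have r2 := geom_succ lam mu (M+1)
    rw [show M + 1 + 1 = M + 2 by ring] at r2
    rw [r2, r1]
    ring_nf
    linear_combination (-(∑ x ∈ Finset.range (1+M), mu ^ (M - x) * lam ^ x)) * h

lemma U_eval_cast (nn : ℤ) (x : ℝ) :
    (((Polynomial.Chebyshev.U ℝ nn).eval x : ℝ) : ℂ)
      = (Polynomial.Chebyshev.U ℂ nn).eval (x : ℂ) := by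
  rw [← Polynomial.Chebyshev.map_U Complex.ofRealHom nn, Polynomial.eval_map,
    show ((x:ℂ)) = Complex.ofRealHom x from rfl, Polynomial.eval₂_at_apply]
  rfl

lemma trace_conj (Q Q' D : Matrix (Fin 2) (Fin 2) ℂ) (h1 : Q * Q' = 1) (h2 : Q' * Q = 1) :
    Matrix.trace (Pim m * P m (Q * D * Q')) = Matrix.trace (Pim m * P m D) := by
  rw [P_mul, P_mul]
  have key : Pim m * (P m Q * P m D * P m Q') = P m Q * (Pim m * P m D * P m Q') := by
    simp only [← Matrix.mul_assoc]
    rw [Pi_mul_P]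
  rw [key, Matrix.trace_mul_comm, Matrix.mul_assoc (Pim m * P m D), ← P_mul, h2, P_one,
    mul_one]

lemma su2_entries (A : Matrix (Fin 2) (Fin 2) ℂ)
    (hA : A ∈ Matrix.specialUnitaryGroup (Fin 2) ℂ) :
    A 1 1 = (starRingEnd ℂ) (A 0 0) ∧ A 1 0 = - (starRingEnd ℂ) (A 0 1) ∧
      A 0 0 * (starRingEnd ℂ) (A 0 0) + A 0 1 * (starRingEnd ℂ) (A 0 1) = 1 := by
  obtain ⟨h1, h2⟩ := Submonoid.mem_inf.mp hA
  have hdet : A.det = 1 := h2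
  have hstar : star A * A = 1 := (Unitary.mem_iff.mp h1).1
  have hadj : star A = A.adjugate := by
    calc star A = star A * (A * A.adjugate) := by
          rw [Matrix.mul_adjugate, hdet, one_smul, mul_one]
      _ = (star A * A) * A.adjugate := by rw [Matrix.mul_assoc]
      _ = A.adjugate := by rw [hstar, one_mul]
  rw [Matrix.adjugate_fin_two] at hadj
  have e00 : (starRingEnd ℂ) (A 0 0) = A 1 1 := by
    have := congrFun (congrFun hadj 0) 0
    simpa [Matrix.conjTranspose_apply] using this
  have e01 : (starRingEnd ℂ) (A 1 0) = -(A 0 1) := by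
    have := congrFun (congrFun hadj 0) 1
    simpa [Matrix.conjTranspose_apply] using this
  refine ⟨e00.symm, ?_, ?_⟩
  · have := congrArg (starRingEnd ℂ) e01
    simpa using this
  · have hd := Matrix.det_fin_two A
    rw [hdet] at hd
    have h10 : A 1 0 = - (starRingEnd ℂ) (A 0 1) := by
      have := congrArg (starRingEnd ℂ) e01
      simpa using this
    rw [h10, ← e00] at hd
    linear_combination -hd

lemma diag_decomp (a b : ℂ) (hb : b ≠ 0)
    (hdet : a * (starRingEnd ℂ) a + b * (starRingEnd ℂ) b = 1) :
    ∃ lam mu : ℂ, ∃ Q Q' : Matrix (Fin 2) (Fin 2) ℂ,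
      lam * mu = 1 ∧ lam + mu = a + (starRingEnd ℂ) a ∧
      Q * Q' = 1 ∧ Q' * Q = 1 ∧
      !![a, b; -(starRingEnd ℂ) b, (starRingEnd ℂ) a]
        = Q * (Matrix.diagonal ![lam, mu] : Matrix (Fin 2) (Fin 2) ℂ) * Q' := by
  have hns : a * (starRingEnd ℂ) a = (Complex.normSq a : ℂ) := by rw [Complex.mul_conj]
  have hnsb : b * (starRingEnd ℂ) b = (Complex.normSq b : ℂ) := by rw [Complex.mul_conj]
  have hsum : (Complex.normSq a : ℝ) + Complex.normSq b = 1 := by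
    have h := hdet; rw [hns, hnsb] at h
    exact_mod_cast h
  have hbpos : 0 < Complex.normSq b := Complex.normSq_pos.mpr hb
  set x := a.re with hx
  have hx2 : x^2 < 1 := by
    have hns2 : Complex.normSq a = x^2 + a.im^2 := by
      rw [Complex.normSq_apply]; ring
    nlinarith [sq_nonneg a.im]
  set s := Real.sqrt (1 - x^2) with hsdef
  have hs_pos : 0 < s := Real.sqrt_pos.mpr (by linarith)
  have hs2 : s^2 = 1 - x^2 := Real.sq_sqrt (by linarith)
  set lam : ℂ := (x:ℂ) + (s:ℂ)*Complex.I with hlamdef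
  set mu : ℂ := (x:ℂ) - (s:ℂ)*Complex.I with hmudef
  have hI : Complex.I^2 = -1 := Complex.I_sq
  have hxs : ((x:ℂ))^2 + ((s:ℂ))^2 = 1 := by
    rw [show ((x:ℂ))^2 + ((s:ℂ))^2 = (((x^2 + s^2 : ℝ)):ℂ) by push_cast; ring]
    rw [hs2]; norm_num
  have hlm : lam * mu = 1 := by
    rw [hlamdef, hmudef]
    linear_combination (-(s:ℂ)^2) * hI + hxs
  have hsum2 : lam + mu = a + (starRingEnd ℂ) a := by
    rw [Complex.add_conj, hlamdef, hmudef]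
    push_cast
    ring
  have hmlne : mu - lam ≠ 0 := by
    have he : mu - lam = -(2*(s:ℂ)*Complex.I) := by rw [hlamdef, hmudef]; ring
    rw [he]
    have hsne : ((s:ℝ):ℂ) ≠ 0 := Complex.ofReal_ne_zero.mpr (ne_of_gt hs_pos)
    exact neg_ne_zero.mpr (mul_ne_zero (mul_ne_zero two_ne_zero hsne) Complex.I_ne_zero)
  set dQ := b * (mu - lam) with hdQdef
  have hdQ : dQ ≠ 0 := mul_ne_zero hb hmlne
  set Q : Matrix (Fin 2) (Fin 2) ℂ := !![b, b; lam - a, mu - a] with hQdef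
  set R : Matrix (Fin 2) (Fin 2) ℂ := !![mu - a, -b; a - lam, b] with hRdef
  have hQR : Q * R = dQ • (1 : Matrix (Fin 2) (Fin 2) ℂ) := by
    ext i j
    fin_cases i <;> fin_cases j <;>
      simp [hQdef, hRdef, hdQdef, Matrix.mul_apply, Fin.sum_univ_two, Matrix.one_apply] <;> ring
  have hRQ : R * Q = dQ • (1 : Matrix (Fin 2) (Fin 2) ℂ) := by
    ext i j
    fin_cases i <;> fin_cases j <;>
      simp [hQdef, hRdef, hdQdef, Matrix.mul_apply, Fin.sum_univ_two, Matrix.one_apply] <;> ring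
  refine ⟨lam, mu, Q, dQ⁻¹ • R, hlm, hsum2, ?_, ?_, ?_⟩
  · rw [Matrix.mul_smul, hQR, smul_smul, inv_mul_cancel₀ hdQ, one_smul]
  · rw [Matrix.smul_mul, hRQ, smul_smul, inv_mul_cancel₀ hdQ, one_smul]
  · have hAQ : !![a, b; -(starRingEnd ℂ) b, (starRingEnd ℂ) a] * Q
        = Q * (Matrix.diagonal ![lam, mu] : Matrix (Fin 2) (Fin 2) ℂ) := by
      ext i j
      fin_cases i <;> fin_cases j <;>
        simp [hQdef, Matrix.mul_apply, Fin.sum_univ_two, Matrix.diagonal]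
      · ring
      · ring
      · linear_combination -hdet - lam * hsum2 + hlm
      · linear_combination -hdet - mu * hsum2 + hlm
    have h1 : Q * (dQ⁻¹ • R) = 1 := by
      rw [Matrix.mul_smul, hQR, smul_smul, inv_mul_cancel₀ hdQ, one_smul]
    calc !![a, b; -(starRingEnd ℂ) b, (starRingEnd ℂ) a]
        = !![a, b; -(starRingEnd ℂ) b, (starRingEnd ℂ) a] * (Q * (dQ⁻¹ • R)) := by
          rw [h1, mul_one]
      _ = (!![a, b; -(starRingEnd ℂ) b, (starRingEnd ℂ) a] * Q) * (dQ⁻¹ • R) := by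
          rw [Matrix.mul_assoc]
      _ = Q * (Matrix.diagonal ![lam, mu] : Matrix (Fin 2) (Fin 2) ℂ) * (dQ⁻¹ • R) := by
          rw [hAQ]

lemma chi_trace (A : Matrix (Fin 2) (Fin 2) ℂ)
    (hA : A ∈ Matrix.specialUnitaryGroup (Fin 2) ℂ) :
    Matrix.trace (Pim m * P m A)
      = (((Polynomial.Chebyshev.U ℝ (m : ℤ)).eval ((A.trace).re / 2) : ℝ) : ℂ) := by
  obtain ⟨h11, h10, hdet⟩ := su2_entries A hA
  have htr : A.trace = A 0 0 + (starRingEnd ℂ) (A 0 0) := by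
    rw [Matrix.trace_fin_two, h11]
  have htr_re : (((A.trace).re : ℝ) : ℂ) = A.trace := by
    rw [htr, Complex.add_conj]
    simp
  rw [U_eval_cast]
  rw [show ((((A.trace).re / 2 : ℝ)) : ℂ) = (((A.trace).re : ℝ) : ℂ) / 2 by push_cast; ring]
  rw [htr_re]
  by_cases hb : A 0 1 = 0
  · have hA0 : A 0 0 * (starRingEnd ℂ) (A 0 0) = 1 := by
      rw [hb] at hdet; simpa using hdet
    have hdiag : A = Matrix.diagonal ![A 0 0, (starRingEnd ℂ) (A 0 0)] := by
      ext i j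
      fin_cases i <;> fin_cases j <;>
        simp [h11, hb, h10, Matrix.diagonal]
    rw [hdiag, trace_Pi_P_diag]
    have := geom_cheb (A 0 0) ((starRingEnd ℂ) (A 0 0)) hA0 m
    simp only [Matrix.cons_val_zero, Matrix.cons_val_one, Matrix.head_cons]
    rw [this]
    congr 1
    simp [Matrix.trace_fin_two]
  · obtain ⟨lam, mu, Q, Q', hlm, hsum2, hQQ', hQ'Q, hdec⟩ :=
      diag_decomp (A 0 0) (A 0 1) hb hdet
    have hAeq : A = !![A 0 0, A 0 1; -(starRingEnd ℂ) (A 0 1), (starRingEnd ℂ) (A 0 0)] := by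
      have h := Matrix.eta_fin_two A
      rw [h11, h10] at h
      exact h
    rw [show Matrix.trace (Pim m * P m A)
        = Matrix.trace (Pim m * P m (Q * (Matrix.diagonal ![lam, mu]) * Q')) by
      rw [← hdec, ← hAeq]]
    rw [trace_conj m Q Q' _ hQQ' hQ'Q, trace_Pi_P_diag]
    have := geom_cheb lam mu hlm m
    simp only [Matrix.cons_val_zero, Matrix.cons_val_one, Matrix.head_cons]
    rw [this]
    congr 1
    rw [htr, ← hsum2]

lemma trace_posdef {ι : Type*} [Fintype ι] [DecidableEq ι] (C : Matrix ι ι ℂ) :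
    (Matrix.trace (star C * C)).im = 0 ∧ 0 ≤ (Matrix.trace (star C * C)).re := by
  have h : Matrix.trace (star C * C)
      = (((∑ f, ∑ g, Complex.normSq (C g f) : ℝ)) : ℂ) := by
    rw [Matrix.trace]
    push_cast
    refine Finset.sum_congr rfl fun f _ => ?_
    rw [Matrix.diag_apply, Matrix.mul_apply]
    refine Finset.sum_congr rfl fun g _ => ?_
    rw [Matrix.star_apply]
    rw [mul_comm, Complex.star_def, Complex.mul_conj]
  constructor
  · rw [h, Complex.ofReal_im]
  · rw [h, Complex.ofReal_re]
    apply Finset.sum_nonneg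
    intro f _
    apply Finset.sum_nonneg
    intro g _
    exact Complex.normSq_nonneg _

end SU2Work

/-- Every character `χ_m` is a positive-definite function on `SU(2)`:
for all `U : Fin n → G` and `z : Fin n → ℂ`, the sum
`∑_{i,k} z_i conj(z_k) χ_m(U_k⁻¹ U_i)` is real and nonnegative. -/
theorem statement3 (m : ℕ) (n : ℕ) (U : Fin n → SU2) (z : Fin n → ℂ) :
    (∑ i, ∑ k, z i * (starRingEnd ℂ) (z k) * (chi m ((U k)⁻¹ * U i) : ℂ)).im = 0 ∧
    0 ≤ (∑ i, ∑ k, z i * (starRingEnd ℂ) (z k) * (chi m ((U k)⁻¹ * U i) : ℂ)).re := by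
  classical
  have hco : ∀ i k : Fin n, (((U k)⁻¹ * U i : SU2) : Matrix (Fin 2) (Fin 2) ℂ)
      = star ((U k : Matrix (Fin 2) (Fin 2) ℂ)) * (U i : Matrix (Fin 2) (Fin 2) ℂ) := by
    intro i k; rfl
  have hterm : ∀ i k : Fin n, ((chi m ((U k)⁻¹ * U i) : ℝ) : ℂ)
      = Matrix.trace (SU2Work.Pim m * SU2Work.P m
          (star ((U k : Matrix (Fin 2) (Fin 2) ℂ)) * (U i : Matrix (Fin 2) (Fin 2) ℂ))) := by
    intro i k
    have hmem : star ((U k : Matrix (Fin 2) (Fin 2) ℂ)) * (U i : Matrix (Fin 2) (Fin 2) ℂ)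
        ∈ Matrix.specialUnitaryGroup (Fin 2) ℂ := hco i k ▸ ((U k)⁻¹ * U i).2
    unfold chi
    rw [hco i k]
    exact (SU2Work.chi_trace m _ hmem).symm
  set B : Matrix (Fin m → Fin 2) (Fin m → Fin 2) ℂ :=
    ∑ i, z i • SU2Work.P m ((U i : Matrix (Fin 2) (Fin 2) ℂ)) with hB
  have hBs : star B = ∑ k, (starRingEnd ℂ) (z k) •
      SU2Work.P m (star ((U k : Matrix (Fin 2) (Fin 2) ℂ))) := by
    rw [hB, star_sum]
    refine Finset.sum_congr rfl fun k _ => ?_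
    rw [star_smul, SU2Work.P_star, Complex.star_def]
  have hexp : star B * (SU2Work.Pim m * B)
      = ∑ k, ∑ i, ((starRingEnd ℂ) (z k) * z i) •
          (SU2Work.Pim m * SU2Work.P m
            (star ((U k : Matrix (Fin 2) (Fin 2) ℂ)) * (U i : Matrix (Fin 2) (Fin 2) ℂ))) := by
    have h1 : SU2Work.Pim m * B
        = ∑ i, z i • (SU2Work.Pim m * SU2Work.P m ((U i : Matrix (Fin 2) (Fin 2) ℂ))) := by
      rw [hB, Finset.mul_sum]
      exact Finset.sum_congr rfl fun i _ => by rw [Matrix.mul_smul]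
    rw [hBs, h1, Finset.sum_mul]
    refine Finset.sum_congr rfl fun k _ => ?_
    rw [Finset.mul_sum]
    refine Finset.sum_congr rfl fun i _ => ?_
    rw [Matrix.smul_mul, Matrix.mul_smul, smul_smul]
    congr 1
    rw [← Matrix.mul_assoc, ← SU2Work.Pi_mul_P, Matrix.mul_assoc, ← SU2Work.P_mul]
  have hfin : (∑ i, ∑ k, z i * (starRingEnd ℂ) (z k) * ((chi m ((U k)⁻¹ * U i) : ℝ) : ℂ))
      = Matrix.trace (star (SU2Work.Pim m * B) * (SU2Work.Pim m * B)) := by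
    have hCsC : star (SU2Work.Pim m * B) * (SU2Work.Pim m * B)
        = star B * (SU2Work.Pim m * B) := by
      rw [star_mul, SU2Work.Pi_star, Matrix.mul_assoc,
        ← Matrix.mul_assoc (SU2Work.Pim m), SU2Work.Pi_idem]
    rw [hCsC, hexp, Matrix.trace_sum]
    simp_rw [Matrix.trace_sum, Matrix.trace_smul]
    rw [Finset.sum_comm]
    refine Finset.sum_congr rfl fun k _ => Finset.sum_congr rfl fun i _ => ?_
    rw [hterm i k, smul_eq_mul]
    ring
  obtain ⟨h1, h2⟩ := SU2Work.trace_posdef (SU2Work.Pim m * B)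
  exact ⟨by rw [hfin]; exact h1, by rw [hfin]; exact h2⟩
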